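/- Let c : S¹ → ℝ² be a smooth immersed closed curve with unit tangent v and unit normal n, and let a, b : S¹ → ℝ be smooth functions. Then the Lie bracket of the vector fields h ↦ a·n and h ↦ b·n on the space of immersions, evaluated at c, equals (a·D_s b − b·D_s a)·v, where D_s = (1/|c'|)∂_θ is the arc-length derivative. -/

import Mathlib

open Real

local notation "⟪" x ", " y "⟫" => @inner ℝ ℂ _ x y

lemma myHasDerivAt_norm {w : ℝ → ℂ} {w' : ℂ} {t : ℝ} (hw : HasDerivAt w w' t)
    (h0 : w t ≠ 0) :
    HasDerivAt (fun s => ‖w s‖) (⟪w t, w'⟫ / ‖w t‖) t := by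
  have h1 : HasDerivAt (fun s => ‖w s‖ ^ 2) (2 * ⟪w t, w'⟫) t := hw.norm_sq
  have h2 := h1.sqrt (pow_ne_zero 2 (norm_ne_zero_iff.2 h0))
  have e1 : (fun s => Real.sqrt (‖w s‖ ^ 2)) = fun s => ‖w s‖ :=
    funext fun s => Real.sqrt_sq (norm_nonneg _)
  rw [e1] at h2
  convert h2 using 1
  rw [Real.sqrt_sq (norm_nonneg _)]
  ring

lemma key_deriv (z h : ℂ) (hz : z ≠ 0) (r : ℝ) :
    HasDerivAt (fun t : ℝ => r • (Complex.I * (‖z + t • h‖⁻¹ • (z + t • h))))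
      (r • (Complex.I * ((‖z‖⁻¹ • h) + (-(⟪z, h⟫ / ‖z‖) / ‖z‖ ^ 2) • z))) 0 := by
  have hw : HasDerivAt (fun t : ℝ => z + t • h) h 0 := by
    simpa using ((hasDerivAt_id (0 : ℝ)).smul_const h).const_add z
  have hN : HasDerivAt (fun t : ℝ => ‖z + t • h‖) (⟪z, h⟫ / ‖z‖) 0 := by
    have := myHasDerivAt_norm hw (by simpa using hz)
    simpa using this
  have hNinv : HasDerivAt (fun t : ℝ => ‖z + t • h‖⁻¹)
      (-(⟪z, h⟫ / ‖z‖) / ‖z‖ ^ 2) 0 := by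
    have := hN.inv (by simpa using norm_ne_zero_iff.2 hz)
    simpa [Pi.inv_def] using this
  have hs : HasDerivAt (fun t : ℝ => ‖z + t • h‖⁻¹ • (z + t • h))
      (‖z‖⁻¹ • h + (-(⟪z, h⟫ / ‖z‖) / ‖z‖ ^ 2) • z) 0 := by
    have := hNinv.smul hw
    simpa [Pi.smul_def'] using this
  exact (hs.const_mul Complex.I).const_smul r

/-- A smooth closed planar curve, modelled as a `2π`-periodic smooth map
`ℝ → ℂ` (the plane `ℝ²` is identified with `ℂ`), with nonvanishing derivative. -/
def IsImmersedLoop (c : ℝ → ℂ) : Prop :=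
  ContDiff ℝ (⊤ : ℕ∞) c ∧ Function.Periodic c (2 * π) ∧ ∀ θ, deriv c θ ≠ 0

/-- The speed `|∂_θ c|` of a curve. -/
noncomputable def speed (c : ℝ → ℂ) (θ : ℝ) : ℝ := ‖deriv c θ‖

/-- The unit tangent `v = c'/|c'|`. -/
noncomputable def unitTangent (c : ℝ → ℂ) (θ : ℝ) : ℂ := (speed c θ)⁻¹ • deriv c θ

/-- The unit normal `n = J v`, rotation of `v` by `π/2` (multiplication by `i`). -/
noncomputable def unitNormal (c : ℝ → ℂ) (θ : ℝ) : ℂ := Complex.I * unitTangent c θ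

/-- The arc-length derivative `D_s = (1/|c'|) ∂_θ` of a real-valued function. -/
noncomputable def arcD (c : ℝ → ℂ) (f : ℝ → ℝ) (θ : ℝ) : ℝ := (speed c θ)⁻¹ * deriv f θ

/-- For an immersed closed planar curve `c` with unit tangent `v` and unit
normal `n`, and smooth `a, b : S¹ → ℝ`, the Lie bracket of the vector fields
`h ↦ a·n` and `h ↦ b·n` on the space of immersions, computed via directional
derivatives as `[an, bn]_c = D_{c,an}(bn) − D_{c,bn}(an)`, equals
`(a·D_s b − b·D_s a)·v` at `c`. -/
theorem stmt10 (c : ℝ → ℂ) (hc : IsImmersedLoop c)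
    (a b : ℝ → ℝ)
    (ha : ContDiff ℝ (⊤ : ℕ∞) a) (hb : ContDiff ℝ (⊤ : ℕ∞) b)
    (hap : Function.Periodic a (2 * π)) (hbp : Function.Periodic b (2 * π)) :
    ∀ θ : ℝ,
      deriv (fun t : ℝ =>
          b θ • unitNormal (fun s => c s + t • (a s • unitNormal c s)) θ) 0
        - deriv (fun t : ℝ =>
          a θ • unitNormal (fun s => c s + t • (b s • unitNormal c s)) θ) 0
      = (a θ * arcD c b θ - b θ * arcD c a θ) • unitTangent c θ := by
  obtain ⟨hcs, -, hz⟩ := hc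
  have hcd : Differentiable ℝ c := hcs.differentiable (by simp)
  have hdc : Differentiable ℝ (deriv c) :=
    ((contDiff_infty_iff_deriv.mp (hcs.of_le (by simp))).2).differentiable (by norm_num)
  have hn : ∀ s, DifferentiableAt ℝ (unitNormal c) s := by
    intro s
    unfold unitNormal unitTangent speed
    exact ((((hdc s).norm ℂ (hz s)).inv (norm_ne_zero_iff.2 (hz s))).smul (hdc s)).const_mul _
  intro θ
  set z := deriv c θ with hzdef
  set n' := deriv (unitNormal c) θ with hn'def
  set hA := a θ • n' + deriv a θ • unitNormal c θ with hAdef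
  set hB := b θ • n' + deriv b θ • unitNormal c θ with hBdef
  have hderivA : HasDerivAt (fun s => a s • unitNormal c s) hA θ :=
    ((ha.differentiable (by simp) θ).hasDerivAt).smul ((hn θ).hasDerivAt)
  have hderivB : HasDerivAt (fun s => b s • unitNormal c s) hB θ :=
    ((hb.differentiable (by simp) θ).hasDerivAt).smul ((hn θ).hasDerivAt)
  have key1 : ∀ t : ℝ, deriv (fun s => c s + t • (a s • unitNormal c s)) θ = z + t • hA :=
    fun t => (((hcd θ).hasDerivAt).add (hderivA.const_smul t)).deriv
  have key2 : ∀ t : ℝ, deriv (fun s => c s + t • (b s • unitNormal c s)) θ = z + t • hB :=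
    fun t => (((hcd θ).hasDerivAt).add (hderivB.const_smul t)).deriv
  have e1 : (fun t : ℝ => b θ • unitNormal (fun s => c s + t • (a s • unitNormal c s)) θ)
      = fun t : ℝ => b θ • (Complex.I * (‖z + t • hA‖⁻¹ • (z + t • hA))) := by
    funext t
    rw [unitNormal, unitTangent, speed, key1 t]
  have e2 : (fun t : ℝ => a θ • unitNormal (fun s => c s + t • (b s • unitNormal c s)) θ)
      = fun t : ℝ => a θ • (Complex.I * (‖z + t • hB‖⁻¹ • (z + t • hB))) := by
    funext t
    rw [unitNormal, unitTangent, speed, key2 t]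
  rw [e1, e2, (key_deriv z hA (hz θ) (b θ)).deriv, (key_deriv z hB (hz θ) (a θ)).deriv]
  have hzn : ⟪z, unitNormal c θ⟫ = 0 := by
    rw [unitNormal, unitTangent, speed, ← hzdef, mul_smul_comm, real_inner_smul_right]
    have : ⟪z, Complex.I * z⟫ = 0 := by
      simp [Complex.inner, Complex.mul_re, Complex.mul_im, Complex.I_re, Complex.I_im]
      ring
    rw [this, mul_zero]
  have hiA : ⟪z, hA⟫ = a θ * ⟪z, n'⟫ := by
    rw [hAdef, inner_add_right, real_inner_smul_right, real_inner_smul_right, hzn]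
    ring
  have hiB : ⟪z, hB⟫ = b θ * ⟪z, n'⟫ := by
    rw [hBdef, inner_add_right, real_inner_smul_right, real_inner_smul_right, hzn]
    ring
  rw [hiA, hiB, hAdef, hBdef]
  simp only [unitNormal, unitTangent, arcD, speed, ← hzdef]
  have hr : (‖z‖ : ℝ) ≠ 0 := norm_ne_zero_iff.2 (hz θ)
  set K := ⟪z, n'⟫
  simp only [Complex.real_smul, smul_eq_mul]
  push_cast
  have hrc : ((‖z‖ : ℝ) : ℂ) ≠ 0 := by exact_mod_cast hr
  field_simp
  ring_nf
  simp only [Complex.I_sq]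
  ring
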